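/- Let W₁ ∈ ℝ^{n×n} and W₂ ∈ ℝ^{M×M} be invertible diagonal matrices, D ∈ ℝ^{n×n}, W₃ ∈ ℝ^{n×n} invertible diagonal, Y ∈ ℝ^{n×M}, ρ > 0, and fixed matrices Z, Δ ∈ ℝ^{n×M}. Then the function C ↦ ‖W₁(Y − DW₃C)W₂‖_F² + (ρ/2)‖C − Z + ρ^{-1}Δ‖_F² is strictly convex and its unique minimizer C satisfies AC + CB = E with A = W₃ᵀDᵀW₁ᵀW₁DW₃, B = (ρ/2)(W₂W₂ᵀ)^{-1}, and E = W₃ᵀDᵀW₁ᵀW₁YW₂W₂ᵀ(W₂W₂ᵀ)^{-1} + ((ρ/2)Z − (1/2)Δ)(W₂W₂ᵀ)^{-1}. -/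
import Mathlib


open Matrix

/-- Squared Frobenius norm of a real matrix. -/
def frobSq {n m : ℕ} (M : Matrix (Fin n) (Fin m) ℝ) : ℝ :=
  ∑ i, ∑ j, (M i j) ^ 2

def dotF {n m : ℕ} (X Y : Matrix (Fin n) (Fin m) ℝ) : ℝ := ∑ i, ∑ j, X i j * Y i j

lemma dotF_eq_trace {n m : ℕ} (X Y : Matrix (Fin n) (Fin m) ℝ) :
    dotF X Y = Matrix.trace (Xᵀ * Y) := by
  simp only [dotF, Matrix.trace, Matrix.diag, Matrix.mul_apply, Matrix.transpose_apply]
  rw [Finset.sum_comm]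

lemma dotF_transfer {n m n' m' : ℕ} (X : Matrix (Fin n) (Fin m) ℝ)
    (P : Matrix (Fin n) (Fin n') ℝ) (H : Matrix (Fin n') (Fin m') ℝ)
    (Q : Matrix (Fin m') (Fin m) ℝ) :
    dotF X (P * H * Q) = dotF (Pᵀ * X * Qᵀ) H := by
  rw [dotF_eq_trace, dotF_eq_trace]
  rw [Matrix.transpose_mul, Matrix.transpose_mul, Matrix.transpose_transpose,
    Matrix.transpose_transpose]
  rw [show Xᵀ * (P * H * Q) = (Xᵀ * P * H) * Q by simp [Matrix.mul_assoc]]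
  rw [Matrix.trace_mul_comm]
  simp [Matrix.mul_assoc]

lemma dotF_smul_left {n m : ℕ} (a : ℝ) (X Y : Matrix (Fin n) (Fin m) ℝ) :
    dotF (a • X) Y = a * dotF X Y := by
  simp [dotF, Finset.mul_sum, mul_assoc]

lemma dotF_sub_left {n m : ℕ} (X X' Y : Matrix (Fin n) (Fin m) ℝ) :
    dotF (X - X') Y = dotF X Y - dotF X' Y := by
  simp [dotF, sub_mul, Finset.sum_sub_distrib]

lemma dotF_all_zero {n m : ℕ} (G : Matrix (Fin n) (Fin m) ℝ)
    (h : ∀ H, dotF G H = 0) : G = 0 := by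
  ext i j
  have := h (Matrix.single i j 1)
  simpa [dotF, Matrix.single, ite_and, Finset.sum_ite_eq, eq_comm] using this


lemma frobSq_nonneg {n m : ℕ} (X : Matrix (Fin n) (Fin m) ℝ) : 0 ≤ frobSq X :=
  Finset.sum_nonneg fun _ _ => Finset.sum_nonneg fun _ _ => sq_nonneg _

lemma frobSq_add_smul {n m : ℕ} (X V : Matrix (Fin n) (Fin m) ℝ) (t : ℝ) :
    frobSq (X + t • V) = frobSq X + 2 * t * dotF X V + t ^ 2 * frobSq V := by
  simp only [frobSq, dotF, Matrix.add_apply, Matrix.smul_apply, smul_eq_mul,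
    Finset.mul_sum, ← Finset.sum_add_distrib]
  exact Finset.sum_congr rfl fun i _ => Finset.sum_congr rfl fun j _ => by ring

lemma comb_pt (a b p q : ℝ) (ha : 0 ≤ a) (hb : 0 ≤ b) (hab : a + b = 1) :
    (a * p + b * q) ^ 2 ≤ a * p ^ 2 + b * q ^ 2 := by
  nlinarith [sq_nonneg (p - q), mul_nonneg ha hb]

lemma frobSq_comb {n m : ℕ} (P Q : Matrix (Fin n) (Fin m) ℝ) {a b : ℝ}
    (ha : 0 ≤ a) (hb : 0 ≤ b) (hab : a + b = 1) :
    frobSq (a • P + b • Q) ≤ a * frobSq P + b * frobSq Q := by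
  simp only [frobSq, Matrix.add_apply, Matrix.smul_apply, smul_eq_mul,
    Finset.mul_sum, ← Finset.sum_add_distrib]
  exact Finset.sum_le_sum fun i _ => Finset.sum_le_sum fun j _ => comb_pt a b _ _ ha hb hab

lemma frobSq_comb_strict {n m : ℕ} {P Q : Matrix (Fin n) (Fin m) ℝ} (hPQ : P ≠ Q) {a b : ℝ}
    (ha : 0 < a) (hb : 0 < b) (hab : a + b = 1) :
    frobSq (a • P + b • Q) < a * frobSq P + b * frobSq Q := by
  obtain ⟨i, j, hij⟩ : ∃ i j, P i j ≠ Q i j := by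
    by_contra h; push_neg at h; exact hPQ (by ext i j; exact h i j)
  simp only [frobSq, Matrix.add_apply, Matrix.smul_apply, smul_eq_mul,
    Finset.mul_sum, ← Finset.sum_add_distrib, ← Fintype.sum_prod_type']
  refine Finset.sum_lt_sum (fun p _ => comb_pt a b _ _ ha.le hb.le hab)
    ⟨(i, j), Finset.mem_univ _, ?_⟩
  have h2 : 0 < (P i j - Q i j) ^ 2 := by
    have := sub_ne_zero.mpr hij; positivity
  nlinarith [mul_pos ha hb, h2]

theorem admm_C_update_stationarity (n M : ℕ)
    (w₁ : Fin n → ℝ) (hw₁ : ∀ i, w₁ i ≠ 0)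
    (w₂ : Fin M → ℝ) (hw₂ : ∀ i, w₂ i ≠ 0)
    (w₃ : Fin n → ℝ) (hw₃ : ∀ i, w₃ i ≠ 0)
    (D : Matrix (Fin n) (Fin n) ℝ) (Y : Matrix (Fin n) (Fin M) ℝ)
    (ρ : ℝ) (hρ : 0 < ρ) (Z Δ : Matrix (Fin n) (Fin M) ℝ) :
    let W₁ := Matrix.diagonal w₁
    let W₂ := Matrix.diagonal w₂
    let W₃ := Matrix.diagonal w₃
    let f : Matrix (Fin n) (Fin M) ℝ → ℝ := fun C =>
      frobSq (W₁ * (Y - D * W₃ * C) * W₂) + (ρ / 2) * frobSq (C - Z + ρ⁻¹ • Δ)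
    let A := W₃ᵀ * Dᵀ * W₁ᵀ * W₁ * D * W₃
    let B := (ρ / 2) • (W₂ * W₂ᵀ)⁻¹
    let E := W₃ᵀ * Dᵀ * W₁ᵀ * W₁ * Y * W₂ * W₂ᵀ * (W₂ * W₂ᵀ)⁻¹ +
      ((ρ / 2) • Z - (1 / 2 : ℝ) • Δ) * (W₂ * W₂ᵀ)⁻¹
    StrictConvexOn ℝ Set.univ f ∧
      ∀ C : Matrix (Fin n) (Fin M) ℝ, (∀ C', f C ≤ f C') →
        A * C + C * B = E := by
  intro W₁ W₂ W₃ f A B E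
  have hf : ∀ C, f C = frobSq (W₁ * (Y - D * W₃ * C) * W₂)
      + (ρ / 2) * frobSq (C - Z + ρ⁻¹ • Δ) := fun _ => rfl
  constructor
  · refine ⟨convex_univ, ?_⟩
    intro x _ y _ hxy a b ha hb hab
    have hsplit1 : ∀ u v : Matrix (Fin n) (Fin M) ℝ,
        W₁ * (Y - D * W₃ * (a • u + b • v)) * W₂
          = a • (W₁ * (Y - D * W₃ * u) * W₂) + b • (W₁ * (Y - D * W₃ * v) * W₂) := by
      intro u v
      have h1 : Y - D * W₃ * (a • u + b • v)
          = a • (Y - D * W₃ * u) + b • (Y - D * W₃ * v) := by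
        rw [Matrix.mul_add, Matrix.mul_smul, Matrix.mul_smul]
        have h2 : a • (Y - D * W₃ * u) + b • (Y - D * W₃ * v)
            = (a + b) • Y - (a • (D * W₃ * u) + b • (D * W₃ * v)) := by module
        rw [h2, hab, one_smul]
      rw [h1, Matrix.mul_add, Matrix.add_mul, Matrix.mul_smul, Matrix.smul_mul,
        Matrix.mul_smul, Matrix.smul_mul]
    have hsplit2 : (a • x + b • y) - Z + ρ⁻¹ • Δ
        = a • (x - Z + ρ⁻¹ • Δ) + b • (y - Z + ρ⁻¹ • Δ) := by
      have h2 : a • (x - Z + ρ⁻¹ • Δ) + b • (y - Z + ρ⁻¹ • Δ)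
          = (a • x + b • y) - (a + b) • Z + (a + b) • ρ⁻¹ • Δ := by module
      rw [h2, hab, one_smul, one_smul]
    have hne : x - Z + ρ⁻¹ • Δ ≠ y - Z + ρ⁻¹ • Δ := by
      intro h
      exact hxy (by have h2 := add_right_cancel h; exact sub_left_inj.mp h2)
    have h1 := frobSq_comb (W₁ * (Y - D * W₃ * x) * W₂) (W₁ * (Y - D * W₃ * y) * W₂)
      ha.le hb.le hab
    have h2 := frobSq_comb_strict hne ha hb hab
    have h3 : (ρ / 2) * frobSq (a • (x - Z + ρ⁻¹ • Δ) + b • (y - Z + ρ⁻¹ • Δ))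
        < (ρ / 2) * (a * frobSq (x - Z + ρ⁻¹ • Δ) + b * frobSq (y - Z + ρ⁻¹ • Δ)) :=
      mul_lt_mul_of_pos_left h2 (by linarith)
    simp only [smul_eq_mul]
    rw [hf, hf, hf, hsplit1, hsplit2]
    nlinarith [h1, h3]
  · intro C hmin
    have hW2d : W₂ = Matrix.diagonal w₂ := rfl
    set X₁ := W₁ * (Y - D * W₃ * C) * W₂ with hX₁
    set X₂ := C - Z + ρ⁻¹ • Δ with hX₂
    set P := W₁ * (D * W₃) with hP
    have hVsplit : ∀ (t : ℝ) (H : Matrix (Fin n) (Fin M) ℝ),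
        W₁ * (Y - D * W₃ * (C + t • H)) * W₂ = X₁ + (-t) • (P * H * W₂) := by
      intro t H
      simp only [hX₁, hP, Matrix.mul_add, Matrix.mul_sub, Matrix.sub_mul, Matrix.add_mul,
        Matrix.mul_smul, Matrix.smul_mul, Matrix.mul_assoc]
      module
    have hquad : ∀ (H : Matrix (Fin n) (Fin M) ℝ) (t : ℝ),
        f (C + t • H) = f C
          + t * (ρ * dotF X₂ H - 2 * dotF X₁ (P * H * W₂))
          + t ^ 2 * (frobSq (P * H * W₂) + ρ / 2 * frobSq H) := by
      intro H t
      rw [hf, hf, hVsplit t H]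
      rw [show C + t • H - Z + ρ⁻¹ • Δ = X₂ + t • H by rw [hX₂]; module]
      rw [frobSq_add_smul, frobSq_add_smul]
      ring
    have hL : ∀ H : Matrix (Fin n) (Fin M) ℝ,
        ρ * dotF X₂ H - 2 * dotF X₁ (P * H * W₂) = 0 := by
      intro H
      set L := ρ * dotF X₂ H - 2 * dotF X₁ (P * H * W₂) with hLdef
      set Q := frobSq (P * H * W₂) + ρ / 2 * frobSq H with hQdef
      have hQ : 0 ≤ Q := by
        have h1 := frobSq_nonneg (P * H * W₂)
        have h2 := frobSq_nonneg H
        rw [hQdef]; nlinarith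
      have hkey : ∀ t : ℝ, 0 ≤ t * L + t ^ 2 * Q := by
        intro t
        have h := hmin (C + t • H)
        rw [hquad H t] at h
        rw [hLdef, hQdef]
        linarith
      by_contra hL0
      have h2 : 0 < L ^ 2 := by positivity
      have hQ1 : 0 < Q + 1 := by linarith
      have ht := hkey (-L / (Q + 1))
      have heq : (-L / (Q + 1)) * L + (-L / (Q + 1)) ^ 2 * Q
          = -((L ^ 2) * 1 / (Q + 1) ^ 2) := by
        field_simp
        ring
      rw [heq] at ht
      have hpos : 0 < L ^ 2 * 1 / (Q + 1) ^ 2 := by positivity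
      linarith
    have hGrad : ρ • X₂ - (2 : ℝ) • (Pᵀ * X₁ * W₂ᵀ) = 0 := by
      apply dotF_all_zero
      intro H
      rw [dotF_sub_left, dotF_smul_left, dotF_smul_left, ← dotF_transfer]
      have := hL H
      linarith
    have eq1 : ρ • X₂ = (2 : ℝ) • (Pᵀ * X₁ * W₂ᵀ) := sub_eq_zero.mp hGrad
    simp only [hX₂, smul_add, smul_sub, smul_smul, mul_inv_cancel₀ (ne_of_gt hρ),
      one_smul] at eq1
    have hdet : IsUnit (W₂ * W₂ᵀ).det := by
      have hd : (W₂ * W₂ᵀ).det = (∏ i, w₂ i) * (∏ i, w₂ i) := by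
        rw [hW2d, Matrix.diagonal_transpose, Matrix.det_mul, Matrix.det_diagonal]
      rw [hd]
      exact isUnit_iff_ne_zero.mpr (mul_ne_zero
        (Finset.prod_ne_zero_iff.mpr fun i _ => hw₂ i)
        (Finset.prod_ne_zero_iff.mpr fun i _ => hw₂ i))
    have hS : (W₂ * W₂ᵀ) * (W₂ * W₂ᵀ)⁻¹ = 1 := Matrix.mul_nonsing_inv _ hdet
    have hS1 : W₂ * (W₂ᵀ * (W₂ * W₂ᵀ)⁻¹) = 1 := by rw [← Matrix.mul_assoc]; exact hS
    have eq2 := congrArg (fun X => X * ((2 : ℝ)⁻¹ • (W₂ * W₂ᵀ)⁻¹)) eq1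
    simp only [hX₁, hP] at eq2
    show A * C + C * B = E
    have hAd : A = W₃ᵀ * Dᵀ * W₁ᵀ * W₁ * D * W₃ := rfl
    have hBd : B = (ρ / 2) • (W₂ * W₂ᵀ)⁻¹ := rfl
    have hEd : E = W₃ᵀ * Dᵀ * W₁ᵀ * W₁ * Y * W₂ * W₂ᵀ * (W₂ * W₂ᵀ)⁻¹ +
      ((ρ / 2) • Z - (1 / 2 : ℝ) • Δ) * (W₂ * W₂ᵀ)⁻¹ := rfl
    rw [hAd, hBd, hEd]
    simp only [Matrix.transpose_mul, Matrix.mul_add, Matrix.add_mul, Matrix.mul_sub,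
      Matrix.sub_mul, Matrix.smul_mul, Matrix.mul_smul, smul_smul, smul_add, smul_sub,
      Matrix.mul_assoc, hS1, Matrix.mul_one, Matrix.one_mul] at eq2 ⊢
    rw [← sub_eq_zero] at eq2 ⊢
    rw [← eq2]
    module
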